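/- Let n be a positive integer and λ an infinite cardinal, and let τ be a shift-continuous T₁ topology on I_λ^n. If (I_λ^n, τ) is infra H-closed (every continuous image in a first countable Hausdorff space is closed), then τ is feebly compact. In particular, if (I_λ^n, τ) is ℝ-compact (every continuous real-valued image is compact) then τ is feebly compact. -/

import Mathlib

open Set Topology

universe v

namespace ISemi

/-- The set of partial injective transformations (partial bijections) of `ι`
with rank (cardinality of the range, equivalently of the domain) at most `n`. -/
def Elem (ι : Type*) (n : ℕ) : Type _ :=
  {f : ι ≃. ι // {a : ι | (f a).isSome}.encard ≤ (n : ℕ∞)}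

variable {ι : Type*} {n : ℕ}

/-- Composition of partial bijections (written multiplicatively). -/
instance : Semigroup (Elem ι n) where
  mul f g := ⟨f.1.trans g.1, by
    refine le_trans (Set.encard_mono ?_) f.2
    intro a ha
    simp only [Set.mem_setOf_eq] at *
    rcases Option.isSome_iff_exists.1 ha with ⟨c, hc⟩
    rcases (PEquiv.trans_eq_some _ _ _ _).1 hc with ⟨b, hb, -⟩
    simp [hb]⟩
  mul_assoc f g h := Subtype.ext (PEquiv.trans_assoc f.1 g.1 h.1)

/-- The inverse partial bijection. -/
def inv (f : Elem ι n) : Elem ι n := ⟨f.1.symm, by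
  have key : ∀ (g : ι ≃. ι), {b : ι | (g.symm b).isSome} ⊆
      (fun p : {a : ι | (g a).isSome} => (g p.1).get p.2) '' Set.univ := by
    intro g b hb
    rcases Option.isSome_iff_exists.1 hb with ⟨a, ha⟩
    have ha' : b ∈ g a := (PEquiv.mem_iff_mem g).1 (Option.mem_def.2 ha)
    simp only [Option.mem_def] at ha'
    refine ⟨⟨a, ?_⟩, Set.mem_univ _, ?_⟩
    · simp [Set.mem_setOf_eq, ha']
    · simp [ha']
  calc {b : ι | (f.1.symm b).isSome}.encard
      ≤ ((fun p : {a : ι | (f.1 a).isSome} => (f.1 p.1).get p.2) '' Set.univ).encard :=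
        Set.encard_mono (key f.1)
    _ ≤ (Set.univ : Set {a : ι | (f.1 a).isSome}).encard := Set.encard_image_le _ _
    _ = {a : ι | (f.1 a).isSome}.encard := by rw [Set.encard_univ, ENat.card_coe_set_eq]
    _ ≤ (n : ℕ∞) := f.2⟩

/-- The zero (the empty partial map). -/
def zero (ι : Type*) (n : ℕ) : Elem ι n := ⟨⊥, by simp [PEquiv.bot_apply]⟩

/-- idempotents -/
def IsIdem (e : Elem ι n) : Prop := e * e = e

/-- The natural partial order on the inverse semigroup `Elem ι n`:
`f ≼ g` iff `f = e * g` for some idempotent `e`. -/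
def nle (f g : Elem ι n) : Prop := ∃ e : Elem ι n, IsIdem e ∧ f = e * g

/-- up-set of `f` w.r.t. the natural partial order -/
def upset (f : Elem ι n) : Set (Elem ι n) := {g | nle f g}

/-- the rank of a partial bijection: the cardinality of its domain (= range) -/
noncomputable def rank (f : Elem ι n) : ℕ∞ := {a : ι | (f.1 a).isSome}.encard

def dom (f : Elem ι n) : Set ι := {a : ι | (f.1 a).isSome}

def ran (f : Elem ι n) : Set ι := {b : ι | (f.1.symm b).isSome}

/-- A topology on `Elem ι n` is shift-continuous if all left and right
translations are continuous. -/
def ShiftContinuous (ι : Type*) (n : ℕ) [TopologicalSpace (Elem ι n)] : Prop :=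
  ∀ a : Elem ι n, Continuous (fun x : Elem ι n => a * x) ∧
    Continuous (fun x : Elem ι n => x * a)

/-- A space is feebly compact if every locally finite family of nonempty open
sets is finite. -/
def FeeblyCompact (X : Type*) [TopologicalSpace X] : Prop :=
  ∀ 𝒰 : Set (Set X), (∀ U ∈ 𝒰, IsOpen U ∧ U.Nonempty) →
    LocallyFinite (fun U : 𝒰 => (U : Set X)) → 𝒰.Finite

/-- A space is `d`-feebly compact if every discrete family of open sets is
finite; a family is discrete if every point has a neighbourhood meeting at
most one member of the family. -/
def DFeeblyCompact (X : Type*) [TopologicalSpace X] : Prop :=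
  ∀ 𝒰 : Set (Set X), (∀ U ∈ 𝒰, IsOpen U) →
    (∀ x : X, ∃ V ∈ 𝓝 x, {U ∈ 𝒰 | (U ∩ V).Nonempty}.Subsingleton) → 𝒰.Finite

/-- countably pracompact: there is a dense set `A` such that every infinite
subset of `A` has an accumulation point in `X`. -/
def CountablyPracompact (X : Type*) [TopologicalSpace X] : Prop :=
  ∃ A : Set X, Dense A ∧ ∀ B ⊆ A, B.Infinite → ∃ x : X, AccPt x (Filter.principal B)

/-- H-closed: closed in every Hausdorff space in which it embeds. -/
def HClosed (X : Type*) [TopologicalSpace X] : Prop :=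
  ∀ (Y : Type v) (_ : TopologicalSpace Y), T2Space Y →
    ∀ e : X → Y, IsEmbedding e → IsClosed (Set.range e)

/-- infra H-closed: every continuous image in a first-countable Hausdorff
space is closed. -/
def InfraHClosed (X : Type*) [TopologicalSpace X] : Prop :=
  ∀ (Y : Type v) (_ : TopologicalSpace Y), T2Space Y →
    FirstCountableTopology Y → ∀ f : X → Y, Continuous f → IsClosed (Set.range f)

/-- `Y`-compactness: every continuous image in `Y` is compact. -/
def YCompact (X : Type*) [TopologicalSpace X] (Y : Type*) [TopologicalSpace Y] : Prop :=
  ∀ f : X → Y, Continuous f → IsCompact (Set.range f)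

/-- scattered: every nonempty subset has a point isolated in it. -/
def Scattered (X : Type*) [TopologicalSpace X] : Prop :=
  ∀ S : Set X, S.Nonempty → ∃ x ∈ S, ∃ U : Set X, IsOpen U ∧ U ∩ S = {x}

/-- semiregular: there is a base consisting of regular open sets. -/
def Semiregular (X : Type*) [TopologicalSpace X] : Prop :=
  ∃ B : Set (Set X), TopologicalSpace.IsTopologicalBasis B ∧
    ∀ U ∈ B, interior (closure U) = U

/-- countably compact: every countable open cover has a finite subcover. -/
def CountablyCompact (X : Type*) [TopologicalSpace X] : Prop :=
  ∀ 𝒰 : Set (Set X), 𝒰.Countable → (∀ U ∈ 𝒰, IsOpen U) → ⋃₀ 𝒰 = Set.univ →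
    ∃ 𝒱 ⊆ 𝒰, 𝒱.Finite ∧ ⋃₀ 𝒱 = Set.univ

end ISemi

/-!
A point `f` of maximal rank in a nonempty open set `U` is isolated. The map
`x ↦ (f f⁻¹) x (f⁻¹ f)` is continuous by shift-continuity and takes only finitely many values
(partial bijections between the finite domain and range of `f`), so in a T₁ space its fibre over
`f` is open; any `x ∈ U` in that fibre extends `f` and has rank at most that of `f`, so `x = f`.

Given an infinite locally finite family of nonempty open sets, pick an isolated point in each
member. These points form an infinite closed set of isolated points, so a function that takes the
values `m / (m + 1)` on a sequence of them and `0` elsewhere is continuous, and its range has `1` in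
its closure but not in it. Since `ℝ` is first countable and Hausdorff, neither infra
H-closedness nor `ℝ`-compactness allows this.
-/

section

variable {X : Type*} [TopologicalSpace X]

theorem continuous_of_eqOn_compl_of_isOpen_singleton {Y : Type*} [TopologicalSpace Y]
    {S : Set X} (hS : IsClosed S) (hiso : ∀ x ∈ S, IsOpen ({x} : Set X)) {f : X → Y} {c : Y}
    (hf : EqOn f (fun _ => c) Sᶜ) : Continuous f := by
  refine continuous_iff_continuousAt.2 fun x => ?_
  by_cases hx : x ∈ S
  · rw [ContinuousAt, (isOpen_singleton_iff_nhds_eq_pure x).1 (hiso x hx)]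
    exact tendsto_pure_nhds f x
  · exact continuousAt_const.congr
      (Filter.eventuallyEq_of_mem (hS.isOpen_compl.mem_nhds hx) fun y hy => (hf hy).symm)

theorem exists_continuous_real_not_isClosed_range {S : Set X} (hS : IsClosed S)
    (hinf : S.Infinite) (hiso : ∀ x ∈ S, IsOpen ({x} : Set X)) :
    ∃ f : X → ℝ, Continuous f ∧ ¬IsClosed (range f) := by
  set p : ℕ → X := Subtype.val ∘ hinf.natEmbedding S
  have hp : Function.Injective p := Subtype.val_injective.comp (hinf.natEmbedding S).injective
  set f : X → ℝ := Function.extend p (fun m => (m : ℝ) / (m + 1)) 0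
  have hfp (m : ℕ) : f (p m) = m / (m + 1) := hp.extend_apply _ _ m
  have hf0 {y : X} (hy : y ∉ range p) : f y = 0 :=
    Function.extend_apply' _ _ _ fun ⟨m, hm⟩ => hy ⟨m, hm⟩
  have hfS : EqOn f (fun _ => 0) Sᶜ := fun y hy =>
    hf0 fun ⟨m, hm⟩ => hy (hm ▸ (hinf.natEmbedding S m).2)
  refine ⟨f, continuous_of_eqOn_compl_of_isOpen_singleton hS hiso hfS, fun hcl => ?_⟩
  have h1 : (1 : ℝ) ∈ range f :=
    hcl.mem_of_tendsto (by simpa only [hfp] using tendsto_natCast_div_add_atTop (1 : ℝ))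
      (Filter.Eventually.of_forall fun m => mem_range_self (p m))
  obtain ⟨y, hy⟩ := h1
  by_cases hyp : y ∈ range p
  · obtain ⟨m, rfl⟩ := hyp
    rw [hfp, div_eq_one_iff_eq (by positivity)] at hy
    linarith
  · rw [hf0 hyp] at hy
    exact zero_ne_one hy

theorem feeblyCompact_of_isClosed_range_real [T1Space X]
    (hiso : ∀ U : Set X, IsOpen U → U.Nonempty → ∃ x ∈ U, IsOpen ({x} : Set X))
    (hcl : ∀ f : X → ℝ, Continuous f → IsClosed (range f)) : ISemi.FeeblyCompact X := by
  intro 𝒰 h𝒰 hlf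
  by_contra hinf
  choose x hxU hxiso using fun U : 𝒰 => hiso U (h𝒰 U U.2).1 (h𝒰 U U.2).2
  have hclosed : IsClosed (range x) := by
    rw [← iUnion_singleton_eq_range]
    exact (hlf.subset fun U => singleton_subset_iff.2 (hxU U)).isClosed_iUnion
      fun _ => isClosed_singleton
  have hrange_inf : (range x).Infinite := fun hfin => hinf <| by
    have := (hfin.preimage' fun y _ => (hlf.point_finite y).subset fun U hU => hU ▸ hxU U)
    rw [preimage_range] at this
    exact Set.finite_coe_iff.1 (Set.finite_univ_iff.1 this)
  obtain ⟨f, hf, hnot⟩ := exists_continuous_real_not_isClosed_range hclosed hrange_inf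
    (by rintro _ ⟨U, rfl⟩; exact hxiso U)
  exact hnot (hcl f hf)

theorem isClosed_range_real_of_infraHClosed (h : ISemi.InfraHClosed.{v} X) {f : X → ℝ}
    (hf : Continuous f) : IsClosed (range f) := by
  have := h (ULift.{v} ℝ) inferInstance inferInstance inferInstance (ULift.up ∘ f)
    (continuous_uliftUp.comp hf)
  rw [range_comp] at this
  exact Homeomorph.ulift.symm.isClosed_image.1 this

end

namespace ISemi

variable {ι : Type*} {n : ℕ}

theorem finite_setOf_graph_subset {s : Set (ι × ι)} (hs : s.Finite) :
    {g : Elem ι n | ∀ a b, b ∈ g.1 a → (a, b) ∈ s}.Finite := by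
  let graph : Elem ι n → Set (ι × ι) := fun g => {p | p.2 ∈ g.1 p.1}
  have hinj : Function.Injective graph := fun g g' h =>
    Subtype.ext <| PEquiv.ext fun a => Option.ext fun b => Set.ext_iff.1 h (a, b)
  exact (hs.finite_subsets.preimage hinj.injOn).subset fun g hg p hp => hg p.1 p.2 hp

theorem finite_dom (f : Elem ι n) : (dom f).Finite :=
  (encard_le_coe_iff_finite_ncard_le.1 f.2).1

theorem ncard_dom_le (f : Elem ι n) : (dom f).ncard ≤ n :=
  (encard_le_coe_iff_finite_ncard_le.1 f.2).2

theorem eq_of_le_of_ncard_dom_le {f g : Elem ι n} (hle : f.1 ≤ g.1)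
    (hcard : (dom g).ncard ≤ (dom f).ncard) : g = f := by
  have hsub : dom f ⊆ dom g := fun a ha => by
    obtain ⟨b, hb⟩ := Option.isSome_iff_exists.1 ha
    show (g.1 a).isSome
    rw [hle a b hb]
    rfl
  have hdom := eq_of_subset_of_ncard_le hsub hcard (finite_dom g)
  refine Subtype.ext <| PEquiv.ext fun a => ?_
  cases hfa : f.1 a with
  | some b => exact hle a b hfa
  | none =>
    have ha : a ∉ dom g := hdom ▸ by simp [dom, hfa]
    simpa [dom] using ha

def corner (f x : Elem ι n) : Elem ι n := f * inv f * x * (inv f * f)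

theorem mem_corner_iff (f x : Elem ι n) (a b : ι) :
    b ∈ (corner f x).1 a ↔ a ∈ dom f ∧ b ∈ x.1 a ∧ b ∈ ran f := by
  rw [show (corner f x).1 = ((f.1.trans f.1.symm).trans x.1).trans (f.1.symm.trans f.1) from rfl,
    PEquiv.self_trans_symm, PEquiv.symm_trans_self]
  simp [PEquiv.trans_eq_some, PEquiv.ofSet_eq_some_iff, dom, ran, and_assoc]

theorem corner_le (f x : Elem ι n) : (corner f x).1 ≤ x.1 := fun a b h =>
  ((mem_corner_iff f x a b).1 h).2.1

theorem corner_self (f : Elem ι n) : corner f f = f := by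
  refine Subtype.ext <| PEquiv.ext fun a => Option.ext fun b =>
    (mem_corner_iff f f a b).trans ⟨fun h => h.2.1, fun h => ⟨?_, h, ?_⟩⟩
  · show (f.1 a).isSome
    rw [h]
    rfl
  · show (f.1.symm b).isSome
    rw [(PEquiv.eq_some_iff f.1).2 h]
    rfl

theorem finite_range_corner (f : Elem ι n) : (range (corner f)).Finite := by
  refine (finite_setOf_graph_subset ((finite_dom f).prod (finite_dom (inv f)))).subset ?_
  rintro _ ⟨x, rfl⟩ a b h
  obtain ⟨ha, -, hb⟩ := (mem_corner_iff f x a b).1 h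
  exact ⟨ha, hb⟩

variable [TopologicalSpace (Elem ι n)]

theorem continuous_corner (hshift : ShiftContinuous ι n) (f : Elem ι n) :
    Continuous (corner f) :=
  (hshift _).2.comp (hshift _).1

theorem exists_isOpen_singleton_mem [T1Space (Elem ι n)] (hshift : ShiftContinuous ι n)
    {U : Set (Elem ι n)} (hU : IsOpen U) (hne : U.Nonempty) :
    ∃ f ∈ U, IsOpen ({f} : Set (Elem ι n)) := by
  obtain ⟨_, ⟨f, hfU, rfl⟩, hmax⟩ := BddAbove.exists_isGreatest_of_nonempty
    (S := (fun g => (dom g).ncard) '' U) ⟨n, by rintro _ ⟨g, -, rfl⟩; exact ncard_dom_le g⟩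
    (hne.image _)
  have hfibre : IsOpen (corner f ⁻¹' {f}) := by
    have : corner f ⁻¹' {f} = corner f ⁻¹' (range (corner f) \ {f})ᶜ := by
      ext x
      simp
    rw [this]
    exact ((finite_range_corner f).sdiff.isClosed.preimage (continuous_corner hshift f)).isOpen_compl
  refine ⟨f, hfU, ?_⟩
  convert hU.inter hfibre
  refine Subset.antisymm (singleton_subset_iff.2 ⟨hfU, corner_self f⟩) fun x ⟨hx, hcx⟩ => ?_
  exact eq_of_le_of_ncard_dom_le (hcx ▸ corner_le f x) (hmax ⟨x, hx, rfl⟩)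

end ISemi

theorem stmt17_general (ι : Type*) (n : ℕ)
    [TopologicalSpace (ISemi.Elem ι n)] [T1Space (ISemi.Elem ι n)]
    (hshift : ISemi.ShiftContinuous ι n) :
    (ISemi.InfraHClosed (ISemi.Elem ι n) → ISemi.FeeblyCompact (ISemi.Elem ι n)) ∧
    (ISemi.YCompact (ISemi.Elem ι n) ℝ → ISemi.FeeblyCompact (ISemi.Elem ι n)) := by
  have hiso (U : Set (ISemi.Elem ι n)) := ISemi.exists_isOpen_singleton_mem hshift (U := U)
  exact ⟨fun h => feeblyCompact_of_isClosed_range_real hiso fun _ hf =>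
      isClosed_range_real_of_infraHClosed h hf,
    fun h => feeblyCompact_of_isClosed_range_real hiso fun f hf => (h f hf).isClosed⟩

theorem stmt17 (ι : Type*) [Infinite ι] (n : ℕ) (hn : 0 < n)
    [TopologicalSpace (ISemi.Elem ι n)] [T1Space (ISemi.Elem ι n)]
    (hshift : ISemi.ShiftContinuous ι n) :
    (ISemi.InfraHClosed (ISemi.Elem ι n) → ISemi.FeeblyCompact (ISemi.Elem ι n)) ∧
    (ISemi.YCompact (ISemi.Elem ι n) ℝ → ISemi.FeeblyCompact (ISemi.Elem ι n)) :=
  stmt17_general ι n hshift
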